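/- arXiv:2507.22015 — 3 statements merged into one kernel-verified Lean document; each statement's English description precedes it below -/
import Mathlib

section
/- For a connected vertex-transitive graph G on n vertices and any vertex u, γ(G) = n / tr(u), where tr(u) = ∑_{v ∈ V(G)} d(u,v) is the transmission of u. -/
open Finset SimpleGraph

/-- `max_{uv ∈ E(G)} |x_u - x_v|` (as a real supremum over adjacent pairs). -/
noncomputable def edgeSup {V : Type*} (G : SimpleGraph V) (x : V → ℝ) : ℝ :=
  ⨆ p : {p : V × V // G.Adj p.1 p.2}, |x p.1.1 - x p.1.2|

/-- The `l_∞`-smoothing parameter `γ(G)`. -/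
noncomputable def gamma {V : Type*} [Fintype V] (G : SimpleGraph V) : ℝ :=
  sInf {y | ∃ x : V → ℝ, (∑ v, x v) = 0 ∧ (⨆ v, |x v|) = 1 ∧ y = edgeSup G x}

/-- Transmission of a vertex: sum of graph distances to all vertices. -/
noncomputable def transmission {V : Type*} [Fintype V] (G : SimpleGraph V) (u : V) : ℕ :=
  ∑ v, G.dist u v

/-! For feasible `x`, pick `w` with `|x w| = 1`. Since `∑ x = 0`,
`n = |∑ v, (x w - x v)| ≤ ∑ v, d(w, v) · max_edge |Δx| = tr(w) · max_edge |Δx|`,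
and vertex-transitivity gives `tr(w) = tr(u)`. Equality is attained by
`x v = 1 - (n / tr u) · d(u, v)`, which changes by at most `n / tr u` along an edge (exactly that
along an edge at `u`); it takes values in `[-1, 1]` because the triangle inequality gives
`n · d(u, v) ≤ tr u + tr v = 2 tr u`. -/

namespace SimpleGraph

variable {V W : Type*} {G : SimpleGraph V} {G' : SimpleGraph W}

lemma Hom.edist_le (f : G →g G') (a b : V) : G'.edist (f a) (f b) ≤ G.edist a b :=
  le_sInf <| by
    rintro _ ⟨p, rfl⟩
    simpa using SimpleGraph.edist_le (p.map f)

lemma Iso.edist_map (φ : G ≃g G') (a b : V) : G'.edist (φ a) (φ b) = G.edist a b :=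
  le_antisymm (Hom.edist_le φ.toHom a b) <| by
    simpa using Hom.edist_le φ.symm.toHom (φ a) (φ b)

lemma Iso.dist_map (φ : G ≃g G') (a b : V) : G'.dist (φ a) (φ b) = G.dist a b := by
  simp only [dist, φ.edist_map]

lemma Adj.abs_sub_dist_le_one {a b : V} (h : G.Adj a b) (u : V) :
    |(G.dist u a : ℝ) - G.dist u b| ≤ 1 := by
  have hd : G.dist u b ≤ G.dist u a + 1 ∧ G.dist u a ≤ G.dist u b + 1 := by
    rcases h.diff_dist_adj (u := u) with h | h | h <;> omega
  have hb : (G.dist u b : ℝ) ≤ G.dist u a + 1 := by exact_mod_cast hd.1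
  have ha : (G.dist u a : ℝ) ≤ G.dist u b + 1 := by exact_mod_cast hd.2
  rw [abs_sub_le_iff]
  constructor <;> linarith

end SimpleGraph

section Transmission

variable {V W : Type*} [Fintype V] [Fintype W] {G : SimpleGraph V} {G' : SimpleGraph W}

lemma transmission_map (φ : G ≃g G') (u : V) : transmission G' (φ u) = transmission G u :=
  (Fintype.sum_equiv φ.toEquiv _ _ fun v => (φ.dist_map u v).symm).symm

lemma transmission_eq_of_forall_exists_iso (htrans : ∀ u v : V, ∃ φ : G ≃g G, φ u = v)
    (u v : V) : transmission G v = transmission G u := by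
  obtain ⟨φ, rfl⟩ := htrans u v
  exact transmission_map φ u

lemma transmission_pos_of_adj {u w : V} (h : G.Adj u w) : 0 < transmission G u :=
  calc 0 < G.dist u w := by simp [dist_eq_one_iff_adj.mpr h]
    _ ≤ transmission G u := single_le_sum (fun v _ => Nat.zero_le (G.dist u v)) (mem_univ w)

lemma card_mul_dist_le_transmission_add (hc : G.Connected) (u v : V) :
    Fintype.card V * G.dist u v ≤ transmission G u + transmission G v := by
  calc Fintype.card V * G.dist u v = ∑ _w : V, G.dist u v := by simp
    _ ≤ ∑ w, (G.dist u w + G.dist v w) := sum_le_sum fun w _ => by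
        rw [dist_comm (u := v)]
        exact hc.dist_triangle
    _ = transmission G u + transmission G v := sum_add_distrib

end Transmission

section EdgeSup

variable {V : Type*} {G : SimpleGraph V} {x : V → ℝ}

lemma abs_sub_le_edgeSup [Finite V] {a b : V} (h : G.Adj a b) : |x a - x b| ≤ edgeSup G x :=
  le_ciSup (f := fun p : {p : V × V // G.Adj p.1 p.2} => |x p.1.1 - x p.1.2|)
    (Set.finite_range _).bddAbove ⟨(a, b), h⟩

lemma edgeSup_le {c : ℝ} (h : ∀ a b, G.Adj a b → |x a - x b| ≤ c) (hc : 0 ≤ c) :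
    edgeSup G x ≤ c :=
  Real.iSup_le (fun p => h _ _ p.2) hc

lemma abs_sub_le_length_mul_edgeSup [Finite V] {a b : V} (p : G.Walk a b) :
    |x a - x b| ≤ p.length * edgeSup G x := by
  induction p with
  | nil => simp
  | @cons a c b h q ih =>
    calc |x a - x b| ≤ |x a - x c| + |x c - x b| := abs_sub_le _ _ _
      _ ≤ edgeSup G x + q.length * edgeSup G x := add_le_add (abs_sub_le_edgeSup h) ih
      _ = (q.cons h).length * edgeSup G x := by rw [Walk.length_cons]; push_cast; ring

lemma abs_sub_le_dist_mul_edgeSup [Finite V] {a b : V} (h : G.Reachable a b) :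
    |x a - x b| ≤ G.dist a b * edgeSup G x := by
  obtain ⟨p, hp⟩ := h.exists_walk_length_eq_dist
  simpa [hp] using abs_sub_le_length_mul_edgeSup (x := x) p

lemma card_mul_abs_le_transmission_mul_edgeSup [Fintype V] (hc : G.Connected)
    (hx : ∑ v, x v = 0) (w : V) :
    Fintype.card V * |x w| ≤ transmission G w * edgeSup G x :=
  calc Fintype.card V * |x w| = |∑ v, (x w - x v)| := by
        rw [sum_sub_distrib, hx, sub_zero, sum_const, card_univ, nsmul_eq_mul, abs_mul,
          Nat.abs_cast]
    _ ≤ ∑ v, G.dist w v * edgeSup G x :=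
        (abs_sum_le_sum_abs _ _).trans
          (sum_le_sum fun v _ => abs_sub_le_dist_mul_edgeSup (hc w v))
    _ = transmission G w * edgeSup G x := by rw [← sum_mul, transmission, Nat.cast_sum]

lemma edgeSup_sub_mul_dist [Finite V] {u w : V} (h : G.Adj u w) (a : ℝ) {c : ℝ} (hc : 0 ≤ c) :
    edgeSup G (fun v => a - c * G.dist u v) = c := by
  refine le_antisymm (edgeSup_le (fun p q hpq => ?_) hc) ?_
  · rw [show a - c * G.dist u p - (a - c * G.dist u q) = c * (G.dist u q - G.dist u p) by ring,
      abs_mul, abs_of_nonneg hc, abs_sub_comm]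
    exact mul_le_of_le_one_right hc (hpq.abs_sub_dist_le_one u)
  · simpa [dist_eq_one_iff_adj.mpr h, abs_of_nonneg hc] using
      abs_sub_le_edgeSup (x := fun v => a - c * G.dist u v) h

end EdgeSup

section Gamma

variable {V : Type*} [Fintype V] {G : SimpleGraph V}

lemma gamma_eq_of_edgeSup_eq_of_le {t : ℝ} (x₀ : V → ℝ) (hsum : ∑ v, x₀ v = 0)
    (hsup : ⨆ v, |x₀ v| = 1) (hx₀ : edgeSup G x₀ = t)
    (hle : ∀ x : V → ℝ, ∑ v, x v = 0 → ⨆ v, |x v| = 1 → t ≤ edgeSup G x) :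
    gamma G = t :=
  IsLeast.csInf_eq
    ⟨⟨x₀, hsum, hsup, hx₀.symm⟩, by rintro _ ⟨x, hx, hx', rfl⟩; exact hle x hx hx'⟩

noncomputable def extremalVector (G : SimpleGraph V) (u : V) (v : V) : ℝ :=
  1 - Fintype.card V / transmission G u * G.dist u v

lemma sum_extremalVector {u : V} (hu : transmission G u ≠ 0) :
    ∑ v, extremalVector G u v = 0 := by
  have hT : (transmission G u : ℝ) ≠ 0 := Nat.cast_ne_zero.mpr hu
  simp only [extremalVector, sum_sub_distrib, ← mul_sum, sum_const, card_univ, nsmul_one]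
  rw [← Nat.cast_sum, ← transmission, div_mul_cancel₀ _ hT, sub_self]

lemma iSup_abs_extremalVector (hc : G.Connected) (u : V)
    (htr : ∀ v, transmission G v = transmission G u) :
    ⨆ v, |extremalVector G u v| = 1 := by
  have hle : ∀ v, |extremalVector G u v| ≤ 1 := fun v => by
    have hd : (Fintype.card V * G.dist u v : ℝ) ≤ 2 * transmission G u := by
      exact_mod_cast (card_mul_dist_le_transmission_add hc u v).trans_eq (by rw [htr v]; ring)
    have hle_two : Fintype.card V / transmission G u * G.dist u v ≤ (2 : ℝ) := by
      rw [div_mul_eq_mul_div]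
      exact div_le_of_le_mul₀ (by positivity) zero_le_two hd
    have hnonneg : (0 : ℝ) ≤ Fintype.card V / transmission G u * G.dist u v := by positivity
    rw [extremalVector, abs_le]
    constructor <;> linarith
  refine le_antisymm (Real.iSup_le hle zero_le_one) ?_
  calc (1 : ℝ) = |extremalVector G u u| := by simp [extremalVector]
    _ ≤ ⨆ v, |extremalVector G u v| :=
        le_ciSup (f := fun v => |extremalVector G u v|) (Set.finite_range _).bddAbove u

end Gamma

theorem stmt1 {V : Type*} [Fintype V] (G : SimpleGraph V) (hc : G.Connected)
    (htrans : ∀ u v : V, ∃ φ : G ≃g G, φ u = v)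
    (hn : 2 ≤ Fintype.card V) (u : V) :
    gamma G = (Fintype.card V : ℝ) / (transmission G u : ℝ) := by
  have : Nontrivial V := Fintype.one_lt_card_iff_nontrivial.mp hn
  obtain ⟨w, huw⟩ := hc.preconnected.exists_adj_of_nontrivial u
  have htr := transmission_eq_of_forall_exists_iso htrans u
  have hT₀ := transmission_pos_of_adj huw
  have hT : (0 : ℝ) < transmission G u := by exact_mod_cast hT₀
  refine gamma_eq_of_edgeSup_eq_of_le (extremalVector G u) (sum_extremalVector hT₀.ne')
    (iSup_abs_extremalVector hc u htr) (edgeSup_sub_mul_dist huw 1 (by positivity)) ?_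
  intro x hx hsup
  obtain ⟨v, hv⟩ := exists_eq_ciSup_of_finite (f := fun v => |x v|)
  have hbound := card_mul_abs_le_transmission_mul_edgeSup hc hx v
  rw [hv, hsup, htr] at hbound
  rw [div_le_iff₀' hT]
  linarith
end

section
/- Let G be connected on n vertices and u a vertex with tr(u) = max_w tr(w). Then the vector x defined by x_u = 1 and x_v = 1 − r·γ(G) for v at distance r from u satisfies ∑_v x_v = 0, ‖x‖_∞ = 1, and max_{vw ∈ E(G)} |x_v − x_w| = γ(G). -/
open Finset SimpleGraph

/-!
Let `n = |V|` and let `T = tr(u)` be the maximal transmission. If `∑ x = 0` and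
`|x w| = max |x| = 1`, then
`n = |∑_v (x w - x v)| ≤ ∑_v d(w,v) · edgeSup x ≤ T · edgeSup x`, so `γ(G) ≥ n / T`.
Conversely the profile `x_v = 1 - d(u,v) · n/T` has sum `n - T · n/T = 0`, edge differences
at most `n/T` with equality on an edge at `u`, and `|x_v| ≤ 1` because
`n · d(u,v) ≤ tr(u) + tr(v) ≤ 2T`. So it attains `γ(G) = n / T`.
-/

namespace SimpleGraph

variable {V : Type*} {G : SimpleGraph V}

lemma abs_sub_le_edgeSup [Finite V] (x : V → ℝ) {v w : V} (h : G.Adj v w) :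
    |x v - x w| ≤ edgeSup G x :=
  le_ciSup (f := fun p : {p : V × V // G.Adj p.1 p.2} => |x p.1.1 - x p.1.2|)
    (Finite.bddAbove_range _) ⟨(v, w), h⟩

lemma edgeSup_nonneg (x : V → ℝ) : 0 ≤ edgeSup G x :=
  Real.iSup_nonneg fun _ => abs_nonneg _

lemma Walk.abs_sub_le_length_mul_edgeSup [Finite V] (x : V → ℝ) {v w : V} (p : G.Walk v w) :
    |x v - x w| ≤ p.length * edgeSup G x := by
  induction p with
  | nil => simp
  | @cons a b c h q ih =>
    calc |x a - x c| ≤ |x a - x b| + |x b - x c| := abs_sub_le _ _ _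
      _ ≤ edgeSup G x + q.length * edgeSup G x := add_le_add (abs_sub_le_edgeSup x h) ih
      _ = (q.cons h).length * edgeSup G x := by push_cast [Walk.length_cons]; ring

lemma Connected.abs_sub_le_dist_mul_edgeSup [Finite V] (hc : G.Connected) (x : V → ℝ)
    (v w : V) : |x v - x w| ≤ G.dist v w * edgeSup G x := by
  obtain ⟨p, hp⟩ := hc.exists_walk_length_eq_dist v w
  simpa [hp] using p.abs_sub_le_length_mul_edgeSup x

lemma Adj.abs_dist_sub_dist_le_one (u : V) {v w : V} (h : G.Adj v w) :
    |(G.dist u v : ℝ) - G.dist u w| ≤ 1 := by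
  obtain ⟨hvw, hwv⟩ : G.dist u v ≤ G.dist u w + 1 ∧ G.dist u w ≤ G.dist u v + 1 := by
    rcases h.diff_dist_adj (u := u) with h | h | h <;> omega
  have hvw' : (G.dist u v : ℝ) ≤ G.dist u w + 1 := by exact_mod_cast hvw
  have hwv' : (G.dist u w : ℝ) ≤ G.dist u v + 1 := by exact_mod_cast hwv
  exact abs_sub_le_iff.mpr ⟨by linarith, by linarith⟩

noncomputable def distProfile (G : SimpleGraph V) (u : V) (c : ℝ) : V → ℝ :=
  fun v => 1 - G.dist u v * c

lemma edgeSup_distProfile [Finite V] {u b : V} {c : ℝ} (hc₀ : 0 ≤ c) (hb : G.Adj u b) :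
    edgeSup G (G.distProfile u c) = c := by
  apply le_antisymm
  · refine Real.iSup_le (fun ⟨(v, w), hvw⟩ => ?_) hc₀
    have : G.distProfile u c v - G.distProfile u c w = ((G.dist u w : ℝ) - G.dist u v) * c := by
      simp only [distProfile]; ring
    rw [this, abs_mul, abs_of_nonneg hc₀]
    exact mul_le_of_le_one_left hc₀ (hvw.symm.abs_dist_sub_dist_le_one u)
  · simpa [distProfile, dist_eq_one_iff_adj.mpr hb, abs_of_nonneg hc₀]
      using abs_sub_le_edgeSup (G.distProfile u c) hb

lemma iSup_abs_distProfile [Finite V] {u : V} {c : ℝ} (hc₀ : 0 ≤ c)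
    (h2 : ∀ v, G.dist u v * c ≤ 2) : ⨆ v, |G.distProfile u c v| = 1 := by
  have hle : ∀ v, |G.distProfile u c v| ≤ 1 := fun v => by
    rw [distProfile, abs_le]
    constructor <;> nlinarith [h2 v, (Nat.cast_nonneg (G.dist u v) : (0 : ℝ) ≤ _)]
  refine le_antisymm (Real.iSup_le hle zero_le_one) ?_
  simpa [distProfile] using le_ciSup (Finite.bddAbove_range fun v => |G.distProfile u c v|) u

section Fintype

variable [Fintype V]

lemma sum_distProfile (u : V) (c : ℝ) :
    ∑ v, G.distProfile u c v = Fintype.card V - transmission G u * c := by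
  simp [distProfile, Finset.sum_sub_distrib, ← Finset.sum_mul, transmission]

lemma Adj.transmission_pos {u b : V} (hb : G.Adj u b) : 0 < transmission G u :=
  calc 0 < G.dist u b := by rw [dist_eq_one_iff_adj.mpr hb]; exact one_pos
    _ ≤ transmission G u := Finset.single_le_sum (fun _ _ => Nat.zero_le _) (Finset.mem_univ b)

lemma Connected.card_mul_dist_le_transmission_add (hc : G.Connected) (u v : V) :
    Fintype.card V * G.dist u v ≤ transmission G u + transmission G v :=
  calc Fintype.card V * G.dist u v = ∑ _w : V, G.dist u v := by simp
    _ ≤ ∑ w, (G.dist u w + G.dist w v) := Finset.sum_le_sum fun _ _ => hc.dist_triangle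
    _ = transmission G u + transmission G v := by
        rw [Finset.sum_add_distrib]
        exact congrArg _ (Finset.sum_congr rfl fun _ _ => dist_comm)

lemma Connected.card_mul_abs_le_transmission_mul_edgeSup (hc : G.Connected) {x : V → ℝ}
    (hx : ∑ v, x v = 0) (w : V) :
    Fintype.card V * |x w| ≤ transmission G w * edgeSup G x :=
  calc (Fintype.card V : ℝ) * |x w| = |∑ v, (x w - x v)| := by
        rw [Finset.sum_sub_distrib, hx, sub_zero, Finset.sum_const, Finset.card_univ,
          nsmul_eq_mul, abs_mul, Nat.abs_cast]
    _ ≤ ∑ v, |x w - x v| := Finset.abs_sum_le_sum_abs _ _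
    _ ≤ ∑ v, G.dist w v * edgeSup G x :=
        Finset.sum_le_sum fun v _ => hc.abs_sub_le_dist_mul_edgeSup x w v
    _ = transmission G w * edgeSup G x := by
        rw [← Finset.sum_mul, transmission, Nat.cast_sum]

variable {u : V} (hc : G.Connected) (hu : ∀ w, transmission G w ≤ transmission G u)
include hc hu

lemma card_div_transmission_le_edgeSup {x : V → ℝ} (hx₀ : ∑ v, x v = 0)
    (hx₁ : ⨆ v, |x v| = 1) : Fintype.card V / transmission G u ≤ edgeSup G x := by
  have : Nonempty V := ⟨u⟩
  obtain ⟨w, hw⟩ := exists_eq_ciSup_of_finite (f := fun v => |x v|)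
  have hxw : |x w| = 1 := hw.trans hx₁
  refine div_le_of_le_mul₀ (Nat.cast_nonneg _) (edgeSup_nonneg x) ?_
  calc (Fintype.card V : ℝ) = Fintype.card V * |x w| := by rw [hxw, mul_one]
    _ ≤ transmission G w * edgeSup G x := hc.card_mul_abs_le_transmission_mul_edgeSup hx₀ w
    _ ≤ edgeSup G x * transmission G u := by
        rw [mul_comm]
        exact mul_le_mul_of_nonneg_left (by exact_mod_cast hu w) (edgeSup_nonneg x)

lemma dist_mul_card_div_transmission_le_two (v : V) :
    G.dist u v * (Fintype.card V / transmission G u : ℝ) ≤ 2 := by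
  rcases (Nat.cast_nonneg (transmission G u) : (0 : ℝ) ≤ _).eq_or_lt with hT | hT
  · simp [← hT]
  rw [mul_div_assoc', div_le_iff₀ hT]
  have hkey : (Fintype.card V * G.dist u v : ℝ) ≤ transmission G u + transmission G v := by
    exact_mod_cast hc.card_mul_dist_le_transmission_add u v
  have huv : (transmission G v : ℝ) ≤ transmission G u := by exact_mod_cast hu v
  linarith

lemma distProfile_spec {b : V} (hb : G.Adj u b) :
    let c : ℝ := Fintype.card V / transmission G u
    ∑ v, G.distProfile u c v = 0 ∧ ⨆ v, |G.distProfile u c v| = 1 ∧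
      edgeSup G (G.distProfile u c) = c := by
  intro c
  have hc₀ : 0 ≤ c := by positivity
  have hT : (transmission G u : ℝ) ≠ 0 := by exact_mod_cast hb.transmission_pos.ne'
  refine ⟨?_, iSup_abs_distProfile hc₀ (dist_mul_card_div_transmission_le_two hc hu),
    edgeSup_distProfile hc₀ hb⟩
  rw [sum_distProfile, mul_div_cancel₀ _ hT, sub_self]

lemma gamma_eq_card_div_transmission {b : V} (hb : G.Adj u b) :
    gamma G = Fintype.card V / transmission G u := by
  obtain ⟨h₀, h₁, h₂⟩ := distProfile_spec hc hu hb
  refine IsLeast.csInf_eq ⟨⟨_, h₀, h₁, h₂.symm⟩, ?_⟩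
  rintro _ ⟨x, hx₀, hx₁, rfl⟩
  exact card_div_transmission_le_edgeSup hc hu hx₀ hx₁

end Fintype

end SimpleGraph

theorem stmt5 {V : Type*} [Fintype V] (G : SimpleGraph V) (hc : G.Connected)
    (hn : 2 ≤ Fintype.card V) (u : V)
    (hu : ∀ w : V, transmission G w ≤ transmission G u) :
    (∑ v, (1 - (G.dist u v : ℝ) * gamma G)) = 0 ∧
    (⨆ v : V, |1 - (G.dist u v : ℝ) * gamma G|) = 1 ∧
    edgeSup G (fun v => 1 - (G.dist u v : ℝ) * gamma G) = gamma G := by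
  have : Nontrivial V := Fintype.one_lt_card_iff_nontrivial.mp hn
  obtain ⟨b, hb⟩ := hc.preconnected.exists_adj_of_nontrivial u
  rw [gamma_eq_card_div_transmission hc hu hb]
  exact distProfile_spec hc hu hb
end

section
/- For any graph G with m edges, b(G) ≤ (m/2)·γ(G), where b(G) is the l₁-smoothing minimum and γ(G) the l_∞-smoothing minimum. -/
open Finset SimpleGraph

/-- `∑_{uv ∈ E(G)} |x_u - x_v|`, each edge counted once. -/
noncomputable def edgeAbsSum {V : Type*} [Fintype V] (G : SimpleGraph V)
    [DecidableRel G.Adj] (x : V → ℝ) : ℝ :=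
  (∑ u, ∑ v, if G.Adj u v then |x u - x v| else 0) / 2

/-- The `l₁`-smoothing parameter `b(G)`. -/
noncomputable def bval {V : Type*} [Fintype V] (G : SimpleGraph V)
    [DecidableRel G.Adj] : ℝ :=
  sInf {y | ∃ x : V → ℝ, (∑ v, x v) = 0 ∧ (∑ v, |x v|) = 1 ∧ y = edgeAbsSum G x}

/-! If `∑ x = 0` and `max |xᵥ| = 1`, the coordinate of largest modulus is balanced by the
others, so `∑ |xᵥ| ≥ 2`. Hence `x / ∑ |xᵥ|` is admissible for `b(G)` and its value is at most
`½ ∑_{uv ∈ E} |xᵤ - xᵥ| ≤ (m/2) · max_{uv ∈ E} |xᵤ - xᵥ|`. -/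

section sumAbs

variable {ι : Type*}

lemma two_mul_abs_le_sum_abs [DecidableEq ι] {s : Finset ι} {x : ι → ℝ}
    (hx : ∑ i ∈ s, x i = 0) {a : ι} (ha : a ∈ s) : 2 * |x a| ≤ ∑ i ∈ s, |x i| := by
  have hxa : x a = -∑ i ∈ s.erase a, x i := by
    rw [← add_sum_erase s x ha] at hx
    linarith
  calc 2 * |x a| = |x a| + |∑ i ∈ s.erase a, x i| := by rw [two_mul, hxa, abs_neg]
    _ ≤ |x a| + ∑ i ∈ s.erase a, |x i| := by gcongr; exact abs_sum_le_sum_abs _ _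
    _ = ∑ i ∈ s, |x i| := add_sum_erase s (fun i => |x i|) ha

variable [Fintype ι]

lemma two_mul_iSup_abs_le_sum_abs {x : ι → ℝ} (hx : ∑ i, x i = 0) :
    2 * ⨆ i, |x i| ≤ ∑ i, |x i| := by
  classical
  rcases isEmpty_or_nonempty ι with _ | _
  · simp
  · obtain ⟨a, ha⟩ := exists_eq_ciSup_of_finite (f := fun i => |x i|)
    rw [← ha]
    exact two_mul_abs_le_sum_abs hx (mem_univ a)

lemma exists_sum_eq_zero_iSup_abs_eq_one (h : 1 < Fintype.card ι) :
    ∃ x : ι → ℝ, ∑ i, x i = 0 ∧ ⨆ i, |x i| = 1 := by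
  classical
  obtain ⟨a, b, hab⟩ := Fintype.exists_pair_of_one_lt_card h
  have : Nonempty ι := ⟨a⟩
  refine ⟨Pi.single a 1 - Pi.single b 1, by simp [sum_sub_distrib], le_antisymm ?_ ?_⟩
  · refine ciSup_le fun i => ?_
    by_cases hia : i = a <;> by_cases hib : i = b <;> simp_all
  · exact le_ciSup_of_le (Set.finite_range _).bddAbove a (by simp [hab])

end sumAbs

namespace SimpleGraph

variable {V : Type*} [Fintype V] (G : SimpleGraph V)

lemma le_edgeSup (x : V → ℝ) {u v : V} (huv : G.Adj u v) : |x u - x v| ≤ edgeSup G x :=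
  le_ciSup (f := fun p : {p : V × V // G.Adj p.1 p.2} => |x p.1.1 - x p.1.2|)
    (Set.finite_range _).bddAbove ⟨(u, v), huv⟩

section edgeAbsSum

variable [DecidableRel G.Adj]

lemma edgeAbsSum_nonneg (x : V → ℝ) : 0 ≤ edgeAbsSum G x := by
  unfold edgeAbsSum
  refine div_nonneg (sum_nonneg fun u _ => sum_nonneg fun v _ => ?_) zero_le_two
  split <;> positivity

lemma edgeAbsSum_smul (c : ℝ) (x : V → ℝ) : edgeAbsSum G (c • x) = |c| * edgeAbsSum G x := by
  simp only [edgeAbsSum, Pi.smul_apply, smul_eq_mul, ← mul_sub, abs_mul]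
  simp only [mul_div_assoc', mul_sum, mul_ite, mul_zero]

lemma edgeAbsSum_le_card_edgeFinset_mul_edgeSup (x : V → ℝ) :
    edgeAbsSum G x ≤ #G.edgeFinset * edgeSup G x := by
  rw [edgeAbsSum, div_le_iff₀ zero_lt_two]
  calc (∑ u, ∑ v, if G.Adj u v then |x u - x v| else 0)
      ≤ ∑ u, ∑ v, if G.Adj u v then edgeSup G x else 0 := by
        gcongr with u _ v _
        split_ifs with huv
        exacts [G.le_edgeSup x huv, le_rfl]
    _ = ∑ u, (G.degree u : ℝ) * edgeSup G x := by
        simp only [← sum_filter, sum_const, ← neighborFinset_eq_filter,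
          card_neighborFinset_eq_degree, nsmul_eq_mul]
    _ = #G.edgeFinset * edgeSup G x * 2 := by
        rw [← sum_mul, ← Nat.cast_sum, sum_degrees_eq_twice_card_edges]
        push_cast
        ring

lemma bval_le_edgeAbsSum_div {x : V → ℝ} (hsum : ∑ v, x v = 0) (hpos : 0 < ∑ v, |x v|) :
    bval G ≤ edgeAbsSum G x / ∑ v, |x v| := by
  refine csInf_le ⟨0, ?_⟩ ⟨(∑ v, |x v|)⁻¹ • x, ?_, ?_, ?_⟩
  · rintro _ ⟨y, -, -, rfl⟩
    exact G.edgeAbsSum_nonneg y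
  · simp [← mul_sum, hsum]
  · simp [abs_mul, ← mul_sum, abs_of_pos hpos, hpos.ne']
  · rw [edgeAbsSum_smul, abs_inv, abs_of_pos hpos, inv_mul_eq_div]

lemma bval_le_mul_edgeSup {x : V → ℝ} (hsum : ∑ v, x v = 0) (hsup : ⨆ v, |x v| = 1) :
    bval G ≤ (#G.edgeFinset / 2 : ℝ) * edgeSup G x := by
  have hS : 2 ≤ ∑ v, |x v| := by simpa [hsup] using two_mul_iSup_abs_le_sum_abs hsum
  calc bval G ≤ edgeAbsSum G x / ∑ v, |x v| := G.bval_le_edgeAbsSum_div hsum (by linarith)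
    _ ≤ edgeAbsSum G x / 2 := div_le_div_of_nonneg_left (G.edgeAbsSum_nonneg x) two_pos hS
    _ ≤ #G.edgeFinset * edgeSup G x / 2 := by
        gcongr
        exact G.edgeAbsSum_le_card_edgeFinset_mul_edgeSup x
    _ = (#G.edgeFinset / 2 : ℝ) * edgeSup G x := by ring

end edgeAbsSum

end SimpleGraph

theorem stmt12_general {V : Type*} [Fintype V] (G : SimpleGraph V)
    [DecidableRel G.Adj] (hn : 2 ≤ Fintype.card V) :
    bval G ≤ ((G.edgeFinset.card : ℝ) / 2) * gamma G := by
  rw [gamma, ← smul_eq_mul, ← Real.sInf_smul_of_nonneg (by positivity)]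
  obtain ⟨x₀, hsum₀, hsup₀⟩ := exists_sum_eq_zero_iSup_abs_eq_one (ι := V) hn
  refine le_csInf (Set.Nonempty.smul_set ⟨_, x₀, hsum₀, hsup₀, rfl⟩) ?_
  rintro _ ⟨_, ⟨x, hsum, hsup, rfl⟩, rfl⟩
  exact G.bval_le_mul_edgeSup hsum hsup

theorem stmt12 {V : Type*} [Fintype V] [DecidableEq V] (G : SimpleGraph V)
    [DecidableRel G.Adj] (hn : 2 ≤ Fintype.card V) :
    bval G ≤ ((G.edgeFinset.card : ℝ) / 2) * gamma G :=
  stmt12_general G hn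
end
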